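/- arXiv:1304.1632 — 3 statements merged into one kernel-verified Lean document; each statement's English description precedes it below -/
import Mathlib

section
/- Let P₁ = 1 + Σ_{s≥1} p_s(x) Λ^s and P₂ = Σ_{s≤0} r_s(x) Λ^s with r₀ invertible, both invertible in the appropriate rings of formal difference-operator series, and let P₁*, P₂* be operators of the analogous opposite forms (P₁* = 1 + Σ_{s≥1} Λ^s p̃_s, P₂* = Σ_{s≤0} Λ^s r̃_s with r̃₀ invertible). If P₁ Λ^{−1} P₁* = P₂ Λ^{−1} P₂*, then P₁*(x−ε) = P₁^{−1} and P₂*(x−ε) = P₂^{−1}, where P*(x−ε) denotes the operator obtained by shifting every coefficient's argument by −ε. -/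
/-!  Difference-operator formal series over a shift ring with automorphism `E`
(`Λ a(x) = a(x+ε) Λ`).  `P₁ = 1 + Σ_{s≥1} p_s(x) Λ^s` is modelled by its left
coefficients `p : ℕ → R` (`p 0 = 1`); `P₁* = 1 + Σ_{s≥1} Λ^s p̃_s` by its right
coefficients `ps : ℕ → R` (`ps 0 = 1`); `P₂ = Σ_{s≤0} r_s Λ^s` by `r : ℕ → R`
(`r n` the coefficient of `Λ^{−n}`, `r 0` invertible); `P₂* = Σ_{s≤0} Λ^s r̃_s`
by its right coefficients `rs : ℕ → R` (`rs 0` invertible). -/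

variable {R : Type*} [CommRing R]

/-- Twisted product for series in nonnegative powers of `Λ`. -/
noncomputable def tmulP (E : RingAut R) (a b : ℕ → R) : ℕ → R :=
  fun n => ∑ p ∈ Finset.HasAntidiagonal.antidiagonal n, a p.1 * (E ^ p.1) (b p.2)

/-- Twisted product for series in nonpositive powers of `Λ` (index `n`
records the coefficient of `Λ^{−n}`). -/
noncomputable def tmulN (E : RingAut R) (a b : ℕ → R) : ℕ → R :=
  fun n => ∑ p ∈ Finset.HasAntidiagonal.antidiagonal n, a p.1 * (E ^ (-(p.1 : ℤ))) (b p.2)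

/-- The identity series `1`. -/
def deltaF : ℕ → R := fun n => if n = 0 then 1 else 0

/-! Moving `Λ^{−1}` to the right, `P₁ Λ^{−1} P₁* = P₁ P₁*(x−ε) Λ^{−1}` involves only powers
`Λ^n` with `n ≥ −1`, while `P₂ Λ^{−1} P₂* = P₂ P₂*(x−ε) Λ^{−1}` involves only `n ≤ −1`. So both
products equal their common `Λ^{−1}`-coefficient `1`, i.e. `P₁*(x−ε)` and `P₂*(x−ε)` are right
inverses of `P₁` and `P₂`. Since `P₁` and `P₂` have invertible leading coefficients they also
have left inverses, built coefficient by coefficient, so these right inverses are two-sided. -/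

open Finset

section TwistedProduct

variable (E : RingAut R)

lemma tmulP_deltaF_left (a : ℕ → R) : tmulP E deltaF a = a := by
  funext n
  rw [tmulP, Nat.sum_antidiagonal_eq_sum_range_succ_mk, sum_range_succ']
  simp [deltaF]

lemma tmulP_deltaF_right (a : ℕ → R) : tmulP E a deltaF = a := by
  funext n
  rw [tmulP, Nat.sum_antidiagonal_eq_sum_range_succ_mk, sum_range_succ, sum_eq_zero]
  · simp [deltaF]
  · intro i hi
    simp [deltaF, Nat.sub_ne_zero_of_lt (mem_range.1 hi)]

lemma tmulP_assoc (a b c : ℕ → R) :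
    tmulP E (tmulP E a b) c = tmulP E a (tmulP E b c) := by
  funext n
  simp only [tmulP, sum_mul, mul_sum, map_sum, map_mul, sum_sigma']
  apply sum_nbij' (fun ⟨⟨_i, j⟩, ⟨k, l⟩⟩ ↦ ⟨(k, l + j), (l, j)⟩)
    (fun ⟨⟨i, _j⟩, ⟨k, l⟩⟩ ↦ ⟨(i + k, l), (i, k)⟩) <;>
    aesop (add simp [add_assoc, mul_assoc, Function.iterate_add_apply])

/-- The coefficients of the left inverse, solved for one after the other from
`∑_{i+j=n} c_i E^i(a_j) = 0`. -/
noncomputable def leftInvP (a : ℕ → R) : ℕ → R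
  | 0 => Ring.inverse (a 0)
  | n + 1 =>
      -(∑ i : Fin (n + 1), leftInvP a i * (E ^ (i : ℕ)) (a (n + 1 - i))) *
        Ring.inverse ((E ^ (n + 1)) (a 0))

lemma tmulP_leftInvP {a : ℕ → R} (ha : IsUnit (a 0)) : tmulP E (leftInvP E a) a = deltaF := by
  funext n
  rw [tmulP, Nat.sum_antidiagonal_eq_sum_range_succ_mk]
  cases n with
  | zero => simp [leftInvP, deltaF, Ring.inverse_mul_cancel _ ha]
  | succ n =>
    have hu : IsUnit ((E ^ (n + 1)) (a 0)) := ha.map (E ^ (n + 1))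
    rw [sum_range_succ, Nat.sub_self, leftInvP, ← Fin.sum_univ_eq_sum_range
      (fun i => leftInvP E a i * (E ^ i) (a (n + 1 - i))), mul_assoc,
      Ring.inverse_mul_cancel _ hu]
    simp [deltaF]

lemma tmulP_comm_of_eq_deltaF {a b : ℕ → R} (ha : IsUnit (a 0))
    (hab : tmulP E a b = deltaF) : tmulP E b a = deltaF := by
  have hb : b = leftInvP E a :=
    calc b = tmulP E (tmulP E (leftInvP E a) a) b := by rw [tmulP_leftInvP E ha, tmulP_deltaF_left]
      _ = leftInvP E a := by rw [tmulP_assoc, hab, tmulP_deltaF_right]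
  exact hb ▸ tmulP_leftInvP E ha

lemma tmulN_eq_tmulP_inv (a b : ℕ → R) : tmulN E a b = tmulP E⁻¹ a b := by
  funext n
  refine sum_congr rfl fun q _ => ?_
  rw [← zpow_natCast E⁻¹, inv_zpow']

lemma tmulN_comm_of_eq_deltaF {a b : ℕ → R} (ha : IsUnit (a 0))
    (hab : tmulN E a b = deltaF) : tmulN E b a = deltaF := by
  rw [tmulN_eq_tmulP_inv] at hab ⊢
  exact tmulP_comm_of_eq_deltaF E⁻¹ ha hab

lemma tmulP_zpow_sub_apply (a b : ℕ → R) (k : ℤ) (n : ℕ) :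
    tmulP E a (fun s => (E ^ ((s : ℤ) - k)) (b s)) n =
      ∑ q ∈ antidiagonal n, a q.1 * (E ^ ((n : ℤ) - k)) (b q.2) := by
  refine sum_congr rfl fun q hq => ?_
  rw [HasAntidiagonal.mem_antidiagonal] at hq
  dsimp only
  rw [← zpow_natCast, ← RingAut.mul_apply, ← zpow_add, ← hq]
  push_cast
  ring_nf

lemma tmulN_zpow_sub_apply (a b : ℕ → R) (k : ℤ) (n : ℕ) :
    tmulN E a (fun t => (E ^ (-(t : ℤ) - k)) (b t)) n =
      ∑ q ∈ antidiagonal n, a q.1 * (E ^ (-(n : ℤ) - k)) (b q.2) := by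
  refine sum_congr rfl fun q hq => ?_
  rw [HasAntidiagonal.mem_antidiagonal] at hq
  dsimp only
  rw [← RingAut.mul_apply, ← zpow_add, ← hq]
  push_cast
  ring_nf

end TwistedProduct

/-- `E ^ (s - 1)` and `E ^ (-t - 1)` turn the right coefficients of `P₁*(x−ε)`, `P₂*(x−ε)` into
left coefficients. -/
theorem adjoint_is_inverse_general (E : RingAut R) (p ps r rs : ℕ → R)
    (hp0 : p 0 = 1) (hps0 : ps 0 = 1) (hr0 : IsUnit (r 0))
    (h : ∀ n : ℤ,
      (if -1 ≤ n then
          ∑ q ∈ Finset.HasAntidiagonal.antidiagonal (n + 1).toNat, p q.1 * (E ^ n) (ps q.2)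
        else 0) =
      (if n ≤ -1 then
          ∑ q ∈ Finset.HasAntidiagonal.antidiagonal (-n - 1).toNat, r q.1 * (E ^ n) (rs q.2)
        else 0)) :
    tmulP E p (fun s => (E ^ ((s : ℤ) - 1)) (ps s)) = deltaF ∧
    tmulP E (fun s => (E ^ ((s : ℤ) - 1)) (ps s)) p = deltaF ∧
    tmulN E r (fun t => (E ^ (-(t : ℤ) - 1)) (rs t)) = deltaF ∧
    tmulN E (fun t => (E ^ (-(t : ℤ) - 1)) (rs t)) r = deltaF := by
  have hP : tmulP E p (fun s => (E ^ ((s : ℤ) - 1)) (ps s)) = deltaF := by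
    funext n
    rw [tmulP_zpow_sub_apply]
    cases n with
    | zero => simp [deltaF, hp0, hps0]
    | succ n =>
      have hn := h n
      rw [if_pos (by omega), if_neg (by omega), show ((n : ℤ) + 1).toNat = n + 1 by omega] at hn
      simpa [deltaF] using hn
  have hN : tmulN E r (fun t => (E ^ (-(t : ℤ) - 1)) (rs t)) = deltaF := by
    funext n
    rw [tmulN_zpow_sub_apply]
    cases n with
    | zero => simpa [deltaF, hp0, hps0] using (h (-1)).symm
    | succ n =>
      have hn := h (-((n + 1 : ℕ) : ℤ) - 1)
      rw [if_neg (by omega), if_pos (by omega),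
        show (-(-((n + 1 : ℕ) : ℤ) - 1) - 1).toNat = n + 1 by omega] at hn
      simpa [deltaF] using hn.symm
  exact ⟨hP, tmulP_comm_of_eq_deltaF E (hp0 ▸ isUnit_one) hP, hN,
    tmulN_comm_of_eq_deltaF E hr0 hN⟩

/-- If `P₁ Λ^{−1} P₁* = P₂ Λ^{−1} P₂*` (equality of the coefficients of `Λ^n`
for every `n ∈ ℤ`), then `P₁*(x−ε) = P₁^{−1}` and `P₂*(x−ε) = P₂^{−1}`, where
`P*(x−ε)` shifts every coefficient's argument by `−ε` (i.e. applies `E^{−1}`). -/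
theorem adjoint_is_inverse (E : RingAut R) (p ps r rs : ℕ → R)
    (hp0 : p 0 = 1) (hps0 : ps 0 = 1) (hr0 : IsUnit (r 0)) (hrs0 : IsUnit (rs 0))
    (h : ∀ n : ℤ,
      (if -1 ≤ n then
          ∑ q ∈ Finset.HasAntidiagonal.antidiagonal (n + 1).toNat, p q.1 * (E ^ n) (ps q.2)
        else 0) =
      (if n ≤ -1 then
          ∑ q ∈ Finset.HasAntidiagonal.antidiagonal (-n - 1).toNat, r q.1 * (E ^ n) (rs q.2)
        else 0)) :
    tmulP E p (fun s => (E ^ ((s : ℤ) - 1)) (ps s)) = deltaF ∧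
    tmulP E (fun s => (E ^ ((s : ℤ) - 1)) (ps s)) p = deltaF ∧
    tmulN E r (fun t => (E ^ (-(t : ℤ) - 1)) (rs t)) = deltaF ∧
    tmulN E (fun t => (E ^ (-(t : ℤ) - 1)) (rs t)) r = deltaF :=
  adjoint_is_inverse_general E p ps r rs hp0 hps0 hr0 h
end

section
/- Let k, m ≥ 1 and Q ≠ 0. Suppose P₁ = 1 + Σ_{s≥1} p_s(x) Λ^s and P₂ = Σ_{s≤0} r_s(x) Λ^s (r₀ invertible) are invertible difference-operator series satisfying P₁ Λ^{−k} P₁^{−1} = P₂ (QΛ)^{m} P₂^{−1} =: L. Then L is a difference operator with finitely many terms, of the form L = Λ^{−k} + u_{−k+1}(x) Λ^{−k+1} + ··· + u_m(x) Λ^m, with top coefficient u_m = Q^m · r₀(x)/r₀(x+εm). -/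
/-!  Difference-operator formal series over a shift ring with automorphism `E`
(`Λ a(x) = a(x+ε) Λ`).  `P₁ = 1 + Σ_{s≥1} p_s(x) Λ^s` is modelled by its
coefficients `p : ℕ → R` with inverse `p'`; `P₂ = Σ_{s≤0} r_s(x) Λ^s` by
`r : ℕ → R` (`r n` the coefficient of `Λ^{−n}`, `r 0` invertible) with inverse
`r'`; `Q` is a constant (`E Q = Q`) nonzero parameter. -/

variable {R : Type*} [CommRing R]

/-- Coefficient of `Λ^s` in `P₁ Λ^{−k} P₁^{−1}` (supported in degrees `s ≥ −k`). -/
noncomputable def dressOne (E : RingAut R) (k : ℕ) (p p' : ℕ → R) (s : ℤ) : R :=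
  if -(k : ℤ) ≤ s then
    ∑ q ∈ Finset.HasAntidiagonal.antidiagonal (s + k).toNat, p q.1 * (E ^ ((q.1 : ℤ) - k)) (p' q.2)
  else 0

/-- Coefficient of `Λ^s` in `P₂ (QΛ)^m P₂^{−1}` (supported in degrees `s ≤ m`),
for a constant `Q`. -/
noncomputable def dressTwo (E : RingAut R) (m : ℕ) (Q : R) (r r' : ℕ → R) (s : ℤ) : R :=
  if s ≤ (m : ℤ) then
    ∑ q ∈ Finset.HasAntidiagonal.antidiagonal ((m : ℤ) - s).toNat,
      r q.1 * Q ^ m * (E ^ ((m : ℤ) - q.1)) (r' q.2)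
  else 0

/-! The two dressings are supported in degrees `≥ −k` and `≤ m` respectively, so their equality
confines `L` to `[−k, m]`. The extreme coefficients only see the constant terms of the series:
`p₀ p'₀ = 1` gives the `Λ^{−k}` coefficient, and `r'₀ r₀ = 1` turns the `Λ^m` coefficient
`r₀ Q^m E^m(r'₀)` into `Q^m r₀ / E^m(r₀)`. -/

section Coefficients

variable (E : RingAut R) (a b : ℕ → R)

theorem tmulP_zero : tmulP E a b 0 = a 0 * b 0 := by
  simp [tmulP]

theorem tmulN_zero : tmulN E a b 0 = a 0 * b 0 := by
  simp only [tmulN, Finset.HasAntidiagonal.antidiagonal_zero, Finset.sum_singleton,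
    Nat.cast_zero, neg_zero, zpow_zero, RingAut.one_apply]

end Coefficients

section Dressing

variable (E : RingAut R)

theorem dressOne_neg_self (k : ℕ) (p p' : ℕ → R) :
    dressOne E k p p' (-(k : ℤ)) = p 0 * (E ^ (-(k : ℤ))) (p' 0) := by
  simp [dressOne]

theorem dressOne_eq_zero_of_lt (k : ℕ) (p p' : ℕ → R) {s : ℤ} (hs : s < -(k : ℤ)) :
    dressOne E k p p' s = 0 := by
  simp [dressOne, not_le.mpr hs]

theorem dressTwo_self (m : ℕ) (Q : R) (r r' : ℕ → R) :
    dressTwo E m Q r r' m = r 0 * Q ^ m * (E ^ (m : ℤ)) (r' 0) := by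
  simp [dressTwo]

theorem dressTwo_eq_zero_of_lt (m : ℕ) (Q : R) (r r' : ℕ → R) {s : ℤ} (hs : (m : ℤ) < s) :
    dressTwo E m Q r r' s = 0 := by
  simp [dressTwo, not_le.mpr hs]

end Dressing

theorem lax_operator_form_general (E : RingAut R) (k m : ℕ)
    (Q : R) (p p' r r' : ℕ → R)
    (hp0 : p 0 = 1) (hpp' : tmulP E p p' = deltaF)
    (hr'r : tmulN E r' r = deltaF)
    (h : ∀ s : ℤ, dressOne E k p p' s = dressTwo E m Q r r' s) :
    dressOne E k p p' (-(k : ℤ)) = 1 ∧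
    (∀ s : ℤ, (m : ℤ) < s → dressOne E k p p' s = 0) ∧
    (∀ s : ℤ, s < -(k : ℤ) → dressTwo E m Q r r' s = 0) ∧
    dressOne E k p p' (m : ℤ) * (E ^ (m : ℤ)) (r 0) = Q ^ m * r 0 := by
  have hp'0 : p' 0 = 1 := by
    simpa [tmulP_zero, deltaF, hp0] using congrFun hpp' 0
  have hr'0 : r' 0 * r 0 = 1 := by
    simpa [tmulN_zero, deltaF] using congrFun hr'r 0
  refine ⟨?_, fun s hs => ?_, fun s hs => ?_, ?_⟩
  · simp [dressOne_neg_self, hp0, hp'0]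
  · rw [h s, dressTwo_eq_zero_of_lt E m Q r r' hs]
  · rw [← h s, dressOne_eq_zero_of_lt E k p p' hs]
  · calc dressOne E k p p' m * (E ^ (m : ℤ)) (r 0)
        = r 0 * Q ^ m * (E ^ (m : ℤ)) (r' 0 * r 0) := by
          rw [h, dressTwo_self, map_mul, mul_assoc]
      _ = Q ^ m * r 0 := by rw [hr'0, map_one, mul_one, mul_comm]

/-- If `P₁ Λ^{−k} P₁^{−1} = P₂ (QΛ)^m P₂^{−1} =: L`, then `L` is a difference
operator with finitely many terms, `L = Λ^{−k} + u_{−k+1} Λ^{−k+1} + ⋯ + u_m Λ^m`,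
with top coefficient `u_m = Q^m · r₀(x)/r₀(x+εm)`. -/
theorem lax_operator_form (E : RingAut R) (k m : ℕ) (hk : 1 ≤ k) (hm : 1 ≤ m)
    (Q : R) (hQ : Q ≠ 0) (hEQ : E Q = Q) (p p' r r' : ℕ → R)
    (hp0 : p 0 = 1) (hpp' : tmulP E p p' = deltaF) (hp'p : tmulP E p' p = deltaF)
    (hr0 : IsUnit (r 0)) (hrr' : tmulN E r r' = deltaF) (hr'r : tmulN E r' r = deltaF)
    (h : ∀ s : ℤ, dressOne E k p p' s = dressTwo E m Q r r' s) :
    dressOne E k p p' (-(k : ℤ)) = 1 ∧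
    (∀ s : ℤ, (m : ℤ) < s → dressOne E k p p' s = 0) ∧
    (∀ s : ℤ, s < -(k : ℤ) → dressTwo E m Q r r' s = 0) ∧
    dressOne E k p p' (m : ℤ) * (E ^ (m : ℤ)) (r 0) = Q ^ m * r 0 :=
  lax_operator_form_general E k m Q p p' r r' hp0 hpp' hr'r h
end

section
/- Let R be a commutative shift ring and suppose W₁, W₂, W₁*, W₂* are invertible difference-operator series (of the appropriate triangular forms) satisfying (i) W₁ Λ^{−1} W₁* = Q W₂ (QΛ)^{−1} W₂* and (ii) (∂_t W₁) W₁^{−1} = (∂_t W₂) W₂^{−1} for a derivation ∂_t of R commuting with the shift, where W₁*, W₂* evolve by the corresponding adjoint equations so that ∂_t(W₁ Λ^{−1} W₁*) and ∂_t(W₂ (QΛ)^{−1} W₂*) are computed by the Leibniz rule with ∂_t W_i* determined by ∂_t(W_i^{−1}). Then for every n ≥ 1, (∂_t^n W₁) Λ^{−1} W₁* = Q (∂_t^n W₂) (QΛ)^{−1} W₂*. -/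
/-!
If `D W₁ = L W₁` and `D W₂ = L W₂` for one common `L` (this is the Sato–Wilson equation (ii),
with `L = (D W₁) W₁⁻¹`), then the Leibniz rule gives `Dⁿ W₁ = Tₙ W₁` and `Dⁿ W₂ = Tₙ W₂` for the
same `Tₙ`, defined by `T₀ = 1`, `Tₙ₊₁ = D Tₙ + Tₙ L`. Multiplying the bilinear identity (i) on the
left by `Tₙ` and moving the central `Q` past `Tₙ` gives the claim.
-/

def iterDerivFactor {A : Type*} [Mul A] [Add A] [One A] (D : A → A) (L : A) : ℕ → A
  | 0 => 1
  | n + 1 => D (iterDerivFactor D L n) + iterDerivFactor D L n * L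

theorem iterate_eq_iterDerivFactor_mul {A : Type*} [Semiring A] {D : A → A}
    (hDmul : ∀ a b : A, D (a * b) = D a * b + a * D b) {L W : A} (hW : D W = L * W) (n : ℕ) :
    D^[n] W = iterDerivFactor D L n * W := by
  induction n with
  | zero => simp [iterDerivFactor]
  | succ n ih =>
    rw [Function.iterate_succ_apply', ih, hDmul, hW, iterDerivFactor, add_mul, mul_assoc]

theorem higher_derivatives_bilinear_general {A : Type*} [Ring A]
    (D : A → A)
    (hDmul : ∀ a b : A, D (a * b) = D a * b + a * D b)
    (Q W₁ W₂ V₁ V₂ M N : A)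
    (hQc : ∀ a : A, Q * a = a * Q)
    (hV₁W₁ : V₁ * W₁ = 1)
    (hV₂W₂ : V₂ * W₂ = 1)
    (hbil : W₁ * M = Q * (W₂ * N))
    (hsato : D W₁ * V₁ = D W₂ * V₂) :
    ∀ n : ℕ, 1 ≤ n → (D^[n] W₁) * M = Q * ((D^[n] W₂) * N) := by
  intro n _
  set L := D W₁ * V₁
  have hW₁ : D W₁ = L * W₁ := by rw [mul_assoc, hV₁W₁, mul_one]
  have hW₂ : D W₂ = L * W₂ := by rw [hsato, mul_assoc, hV₂W₂, mul_one]
  set T := iterDerivFactor D L n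
  calc D^[n] W₁ * M = T * (W₁ * M) := by
        rw [iterate_eq_iterDerivFactor_mul hDmul hW₁, mul_assoc]
    _ = Q * (D^[n] W₂ * N) := by
        rw [hbil, ← mul_assoc, ← hQc, iterate_eq_iterDerivFactor_mul hDmul hW₂, mul_assoc,
          mul_assoc]

/-- Induction step from the Sato–Wilson equations to the bilinear identity.
In the (noncommutative) ring of difference-operator series, let `W₁, W₂` be
invertible wave operators with inverses `V₁, V₂`, let `M = Λ^{−1}W₁*` and
`N = (QΛ)^{−1}W₂*`, and let `D = ∂_t` be a derivation (acting coefficient-wise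
and commuting with the shift).  Assume: (i) `W₁ M = Q W₂ N`; (ii)
`(D W₁) W₁^{−1} = (D W₂) W₂^{−1}`; and the adjoint evolutions
`D M = −W₁^{−1}(D W₁) M`, `D N = −W₂^{−1}(D W₂) N` (so `D` of the bilinear
products is computed by the Leibniz rule with `D W_i*` determined by
`D(W_i^{−1})`); `Q` is a central constant.  Then for every `n ≥ 1`,
`(Dⁿ W₁) M = Q (Dⁿ W₂) N`. -/
theorem higher_derivatives_bilinear {A : Type*} [Ring A]
    (D : A → A) (hDadd : ∀ a b : A, D (a + b) = D a + D b)
    (hDmul : ∀ a b : A, D (a * b) = D a * b + a * D b)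
    (Q W₁ W₂ V₁ V₂ M N : A)
    (hQc : ∀ a : A, Q * a = a * Q) (hDQ : D Q = 0)
    (hW₁V₁ : W₁ * V₁ = 1) (hV₁W₁ : V₁ * W₁ = 1)
    (hW₂V₂ : W₂ * V₂ = 1) (hV₂W₂ : V₂ * W₂ = 1)
    (hbil : W₁ * M = Q * (W₂ * N))
    (hsato : D W₁ * V₁ = D W₂ * V₂)
    (hM : D M = -(V₁ * D W₁ * M))
    (hN : D N = -(V₂ * D W₂ * N)) :
    ∀ n : ℕ, 1 ≤ n → (D^[n] W₁) * M = Q * ((D^[n] W₂) * N) :=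
  higher_derivatives_bilinear_general D hDmul Q W₁ W₂ V₁ V₂ M N hQc hV₁W₁ hV₂W₂ hbil hsato
end
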